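/- arXiv:1506.03369 — 4 statements merged into one kernel-verified Lean document; each statement's English description precedes it below -/
import Mathlib

section
/- Let a < b be reals and P_{[a,b]} the orthogonal projection of ℝ onto [a,b]. For 0 < m < M, l ∈ L_ad = {l : M^{-3} ≤ l ≤ m^{-3} a.e.} and g ∈ L^1(Ω), the variational inequality ∫_Ω (g - (1/3) l^{-4/3})(k - l) dx ≥ 0 for all k ∈ L_ad holds if and only if l = (P_{[m^4, M^4]}(3g))^{-3/4} almost everywhere in Ω. -/
open MeasureTheory

/-- The orthogonal projection (clamp) of `ℝ` onto the interval `[a, b]`. -/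
def proj (a b t : ℝ) : ℝ := max a (min b t)

namespace Stmt1Aux

lemma proj_of_le {a b t : ℝ} (hab : a ≤ b) (h : t ≤ a) : proj a b t = a := by
  simp [proj, min_eq_right (h.trans hab), max_eq_left h]

lemma proj_of_ge {a b t : ℝ} (hab : a ≤ b) (h : b ≤ t) : proj a b t = b := by
  simp [proj, min_eq_left h, max_eq_right hab]

lemma proj_of_mem {a b t : ℝ} (h1 : a ≤ t) (h2 : t ≤ b) : proj a b t = t := by
  simp [proj, min_eq_right h2, max_eq_right h1]

lemma rpow_cancel₁ {t : ℝ} (ht : 0 < t) : (t ^ (-(4/3) : ℝ)) ^ (-(3/4) : ℝ) = t := by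
  rw [← Real.rpow_mul ht.le]
  norm_num

lemma rpow_cancel₂ {t : ℝ} (ht : 0 < t) : (t ^ (-(3/4) : ℝ)) ^ (-(4/3) : ℝ) = t := by
  rw [← Real.rpow_mul ht.le]
  norm_num

lemma rpow_M4 {M : ℝ} (hM : 0 < M) : (M ^ (-3 : ℝ)) ^ (-(4/3) : ℝ) = M ^ (4 : ℝ) := by
  rw [← Real.rpow_mul hM.le]
  norm_num

lemma rpow_M3 {M : ℝ} (hM : 0 < M) : (M ^ (4 : ℝ)) ^ (-(3/4) : ℝ) = M ^ (-3 : ℝ) := by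
  rw [← Real.rpow_mul hM.le]
  norm_num

variable {m M : ℝ}

lemma s_mem (hm : 0 < m) (hmM : m < M) {lx : ℝ}
    (h1 : M ^ (-3 : ℝ) ≤ lx) (h2 : lx ≤ m ^ (-3 : ℝ)) :
    m ^ (4 : ℝ) ≤ lx ^ (-(4/3) : ℝ) ∧ lx ^ (-(4/3) : ℝ) ≤ M ^ (4 : ℝ) := by
  have hM0 : 0 < M := hm.trans hmM
  have hl0 : 0 < lx := lt_of_lt_of_le (Real.rpow_pos_of_pos hM0 _) h1
  constructor
  · rw [← rpow_M4 hm]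
    exact Real.rpow_le_rpow_of_nonpos hl0 h2 (by norm_num)
  · rw [← rpow_M4 hM0]
    exact Real.rpow_le_rpow_of_nonpos (Real.rpow_pos_of_pos hM0 _) h1 (by norm_num)

lemma pt_iff (hm : 0 < m) (hmM : m < M) {lx gx : ℝ}
    (h1 : M ^ (-3 : ℝ) ≤ lx) (h2 : lx ≤ m ^ (-3 : ℝ)) :
    ((0 < gx - (1/3) * lx ^ (-(4/3) : ℝ) → lx = M ^ (-3 : ℝ)) ∧
     (gx - (1/3) * lx ^ (-(4/3) : ℝ) < 0 → lx = m ^ (-3 : ℝ))) ↔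
    lx = proj (m ^ (4 : ℝ)) (M ^ (4 : ℝ)) (3 * gx) ^ (-(3/4) : ℝ) := by
  have hM0 : 0 < M := hm.trans hmM
  have hl0 : 0 < lx := lt_of_lt_of_le (Real.rpow_pos_of_pos hM0 _) h1
  have hab : m ^ (4 : ℝ) ≤ M ^ (4 : ℝ) := Real.rpow_le_rpow hm.le hmM.le (by norm_num)
  obtain ⟨hsa, hsb⟩ := s_mem hm hmM h1 h2
  constructor
  · rintro ⟨hpos, hneg⟩
    rcases lt_trichotomy (gx - (1/3) * lx ^ (-(4/3) : ℝ)) 0 with h | h | h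
    · have hlB := hneg h
      have hs : lx ^ (-(4/3) : ℝ) = m ^ (4 : ℝ) := by rw [hlB, rpow_M4 hm]
      have h3g : 3 * gx ≤ m ^ (4 : ℝ) := by nlinarith [hs]
      rw [proj_of_le hab h3g, rpow_M3 hm, hlB]
    · have hs : 3 * gx = lx ^ (-(4/3) : ℝ) := by linarith
      rw [proj_of_mem (hs ▸ hsa) (hs ▸ hsb), hs, rpow_cancel₁ hl0]
    · have hlA := hpos h
      have hs : lx ^ (-(4/3) : ℝ) = M ^ (4 : ℝ) := by rw [hlA, rpow_M4 hM0]
      have h3g : M ^ (4 : ℝ) ≤ 3 * gx := by nlinarith [hs]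
      rw [proj_of_ge hab h3g, rpow_M3 hM0, hlA]
  · intro h
    have ha0 : 0 < m ^ (4 : ℝ) := Real.rpow_pos_of_pos hm _
    rcases le_or_gt (3 * gx) (m ^ (4 : ℝ)) with hc | hc
    · have hlx : lx = m ^ (-3 : ℝ) := by rw [h, proj_of_le hab hc, rpow_M3 hm]
      have hs : lx ^ (-(4/3) : ℝ) = m ^ (4 : ℝ) := by rw [hlx, rpow_M4 hm]
      constructor
      · intro hpos; exfalso; nlinarith
      · intro _; exact hlx
    rcases le_or_gt (M ^ (4 : ℝ)) (3 * gx) with hc' | hc'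
    · have hlx : lx = M ^ (-3 : ℝ) := by rw [h, proj_of_ge hab hc', rpow_M3 hM0]
      have hs : lx ^ (-(4/3) : ℝ) = M ^ (4 : ℝ) := by rw [hlx, rpow_M4 hM0]
      constructor
      · intro _; exact hlx
      · intro hneg; exfalso; nlinarith
    · have hlx : lx = (3 * gx) ^ (-(3/4) : ℝ) := by rw [h, proj_of_mem hc.le hc'.le]
      have hs : lx ^ (-(4/3) : ℝ) = 3 * gx := by
        rw [hlx, rpow_cancel₂ (lt_of_lt_of_le ha0 hc.le)]
      constructor
      · intro hpos; exfalso; nlinarith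
      · intro hneg; exfalso; nlinarith

lemma pt_prod_nonneg (hm : 0 < m) (hmM : m < M) {lx gx kx : ℝ}
    (hk1 : M ^ (-3 : ℝ) ≤ kx) (hk2 : kx ≤ m ^ (-3 : ℝ))
    (hlx : lx = proj (m ^ (4 : ℝ)) (M ^ (4 : ℝ)) (3 * gx) ^ (-(3/4) : ℝ)) :
    0 ≤ (gx - (1/3) * lx ^ (-(4/3) : ℝ)) * (kx - lx) := by
  have hM0 : 0 < M := hm.trans hmM
  have hab : m ^ (4 : ℝ) ≤ M ^ (4 : ℝ) := Real.rpow_le_rpow hm.le hmM.le (by norm_num)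
  have ha0 : 0 < m ^ (4 : ℝ) := Real.rpow_pos_of_pos hm _
  rcases le_or_gt (3 * gx) (m ^ (4 : ℝ)) with hc | hc
  · have hlx' : lx = m ^ (-3 : ℝ) := by rw [hlx, proj_of_le hab hc, rpow_M3 hm]
    have hs : lx ^ (-(4/3) : ℝ) = m ^ (4 : ℝ) := by rw [hlx', rpow_M4 hm]
    have h1 : gx - (1/3) * lx ^ (-(4/3) : ℝ) ≤ 0 := by rw [hs]; linarith
    have h2 : kx - lx ≤ 0 := by rw [hlx']; linarith
    nlinarith [mul_nonneg (neg_nonneg.2 h1) (neg_nonneg.2 h2)]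
  rcases le_or_gt (M ^ (4 : ℝ)) (3 * gx) with hc' | hc'
  · have hlx' : lx = M ^ (-3 : ℝ) := by rw [hlx, proj_of_ge hab hc', rpow_M3 hM0]
    have hs : lx ^ (-(4/3) : ℝ) = M ^ (4 : ℝ) := by rw [hlx', rpow_M4 hM0]
    have h1 : 0 ≤ gx - (1/3) * lx ^ (-(4/3) : ℝ) := by rw [hs]; linarith
    have h2 : 0 ≤ kx - lx := by rw [hlx']; linarith
    exact mul_nonneg h1 h2
  · have hlx' : lx = (3 * gx) ^ (-(3/4) : ℝ) := by rw [hlx, proj_of_mem hc.le hc'.le]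
    have hs : lx ^ (-(4/3) : ℝ) = 3 * gx := by
      rw [hlx', rpow_cancel₂ (lt_of_lt_of_le ha0 hc.le)]
    have h1 : gx - (1/3) * lx ^ (-(4/3) : ℝ) = 0 := by rw [hs]; ring
    rw [h1, zero_mul]

end Stmt1Aux
theorem stmt1 {α : Type*} [MeasurableSpace α] (μ : Measure α) [IsFiniteMeasure μ]
    (m M : ℝ) (hm : 0 < m) (hmM : m < M)
    (Lad : Set (α → ℝ))
    (hLad : Lad = {l | AEMeasurable l μ ∧
      ∀ᵐ x ∂μ, M ^ (-3 : ℝ) ≤ l x ∧ l x ≤ m ^ (-3 : ℝ)})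
    (l : α → ℝ) (hl : l ∈ Lad)
    (g : α → ℝ) (hg : Integrable g μ) :
    (∀ k ∈ Lad, 0 ≤ ∫ x, (g x - (1/3) * l x ^ (-(4/3) : ℝ)) * (k x - l x) ∂μ) ↔
      ∀ᵐ x ∂μ, l x = proj (m ^ (4 : ℝ)) (M ^ (4 : ℝ)) (3 * g x) ^ (-(3/4) : ℝ) := by
  subst hLad
  obtain ⟨hlm, hlb⟩ := hl
  have hM0 : 0 < M := hm.trans hmM
  have hAB : M ^ (-3 : ℝ) ≤ m ^ (-3 : ℝ) :=
    Real.rpow_le_rpow_of_nonpos hm hmM.le (by norm_num)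
  have hgm : AEMeasurable g μ := hg.aemeasurable
  constructor
  · intro hVI
    set L := hlm.mk l with hL
    set G := hgm.mk g with hG
    have hLmeas : Measurable L := hlm.measurable_mk
    have hGmeas : Measurable G := hgm.measurable_mk
    have hlL : l =ᵐ[μ] L := hlm.ae_eq_mk
    have hgG : g =ᵐ[μ] G := hgm.ae_eq_mk
    set Φ : α → ℝ := fun x => G x - (1/3) * L x ^ (-(4/3) : ℝ) with hΦ
    have hΦmeas : Measurable Φ := by fun_prop
    set k₀ : α → ℝ := fun x => if 0 ≤ Φ x then M ^ (-3 : ℝ) else m ^ (-3 : ℝ) with hk₀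
    have hk₀meas : Measurable k₀ :=
      Measurable.ite (measurableSet_le measurable_const hΦmeas) measurable_const
        measurable_const
    have hk₀mem : k₀ ∈ {l : α → ℝ | AEMeasurable l μ ∧
        ∀ᵐ x ∂μ, M ^ (-3 : ℝ) ≤ l x ∧ l x ≤ m ^ (-3 : ℝ)} := by
      refine ⟨hk₀meas.aemeasurable, Filter.Eventually.of_forall fun x => ?_⟩
      by_cases h : 0 ≤ Φ x <;> simp [hk₀, h, hAB, le_refl] <;> simpa using hAB
    have hint := hVI k₀ hk₀mem
    set f : α → ℝ := fun x => (g x - (1/3) * l x ^ (-(4/3) : ℝ)) * (k₀ x - l x) with hf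
    have hfm : AEMeasurable f μ := by fun_prop
    have hbnd : ∀ᵐ x ∂μ, ‖f x‖ ≤ (|g x| + (1/3) * M ^ (4 : ℝ)) * (m ^ (-3 : ℝ)) := by
      filter_upwards [hlb] with x ⟨h1, h2⟩
      obtain ⟨hsa, hsb⟩ := Stmt1Aux.s_mem hm hmM h1 h2
      have hs0 : 0 ≤ l x ^ (-(4/3) : ℝ) := le_trans (Real.rpow_pos_of_pos hm _).le hsa
      have hA0 : 0 < M ^ (-3 : ℝ) := Real.rpow_pos_of_pos hM0 _
      have hk₀b : M ^ (-3 : ℝ) ≤ k₀ x ∧ k₀ x ≤ m ^ (-3 : ℝ) := by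
        by_cases h : 0 ≤ Φ x <;> simp [hk₀, h, hAB, le_refl] <;> simpa using hAB
      rw [hf, Real.norm_eq_abs, abs_mul]
      have e1 : |g x - (1/3) * l x ^ (-(4/3) : ℝ)| ≤ |g x| + (1/3) * M ^ (4 : ℝ) := by
        calc |g x - (1/3) * l x ^ (-(4/3) : ℝ)| ≤ |g x| + |(1/3) * l x ^ (-(4/3) : ℝ)| :=
              abs_sub _ _
          _ ≤ |g x| + (1/3) * M ^ (4 : ℝ) := by
              rw [abs_mul, abs_of_nonneg hs0, abs_of_nonneg (by norm_num : (0:ℝ) ≤ 1/3)]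
              linarith
      have e2 : |k₀ x - l x| ≤ m ^ (-3 : ℝ) := by
        rw [abs_sub_le_iff]
        constructor <;> nlinarith [hk₀b.1, hk₀b.2, hA0]
      have h0 : (0:ℝ) ≤ |k₀ x - l x| := abs_nonneg _
      nlinarith [abs_nonneg (g x), Real.rpow_pos_of_pos hM0 (4:ℝ)]
    have hfint : Integrable f μ :=
      Integrable.mono' ((hg.abs.add (integrable_const _)).mul_const _)
        hfm.aestronglyMeasurable hbnd
    have hfnonpos : f ≤ᵐ[μ] 0 := by
      filter_upwards [hlb, hlL, hgG] with x ⟨h1, h2⟩ hlx hgx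
      have hΦx : Φ x = g x - (1/3) * l x ^ (-(4/3) : ℝ) := by
        rw [hΦ]; simp [← hlx, ← hgx]
      by_cases h : 0 ≤ Φ x
      · have : k₀ x = M ^ (-3 : ℝ) := by simp [hk₀, h]
        simp only [hf, Pi.zero_apply, this, ← hΦx]
        exact mul_nonpos_of_nonneg_of_nonpos h (by linarith)
      · have : k₀ x = m ^ (-3 : ℝ) := by simp [hk₀, h]
        simp only [hf, Pi.zero_apply, this, ← hΦx]
        exact mul_nonpos_of_nonpos_of_nonneg (le_of_not_ge h) (by linarith)
    have hzero : ∫ x, f x ∂μ = 0 :=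
      le_antisymm (integral_nonpos_of_ae hfnonpos) hint
    have hfeq : f =ᵐ[μ] 0 := by
      have hneg : -f =ᵐ[μ] 0 :=
        (integral_eq_zero_iff_of_nonneg_ae
          (by filter_upwards [hfnonpos] with x hx; simpa using hx) hfint.neg).mp
          (by simp only [Pi.neg_apply]; rw [integral_neg, hzero, neg_zero])
      filter_upwards [hneg] with x hx
      simpa using neg_eq_zero.mp hx
    filter_upwards [hlb, hlL, hgG, hfeq] with x ⟨h1, h2⟩ hlx hgx hfx
    refine (Stmt1Aux.pt_iff hm hmM h1 h2).mp ⟨?_, ?_⟩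
    · intro hpos
      have hΦx : Φ x = g x - (1/3) * l x ^ (-(4/3) : ℝ) := by
        rw [hΦ]; simp [← hlx, ← hgx]
      have hk : k₀ x = M ^ (-3 : ℝ) := by simp [hk₀, hΦx ▸ hpos.le]
      have : (g x - (1/3) * l x ^ (-(4/3) : ℝ)) * (k₀ x - l x) = 0 := hfx
      rw [hk] at this
      rcases mul_eq_zero.mp this with h | h
      · exact absurd h (ne_of_gt hpos)
      · linarith [sub_eq_zero.mp h]
    · intro hneg
      have hΦx : Φ x = g x - (1/3) * l x ^ (-(4/3) : ℝ) := by
        rw [hΦ]; simp [← hlx, ← hgx]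
      have hΦneg : ¬ (0 ≤ Φ x) := by rw [hΦx]; linarith
      have hk : k₀ x = m ^ (-3 : ℝ) := by simp [hk₀, hΦneg]
      have : (g x - (1/3) * l x ^ (-(4/3) : ℝ)) * (k₀ x - l x) = 0 := hfx
      rw [hk] at this
      rcases mul_eq_zero.mp this with h | h
      · exact absurd h (ne_of_lt hneg)
      · linarith [sub_eq_zero.mp h]
  · intro hae k hk
    refine integral_nonneg_of_ae ?_
    filter_upwards [hae, hk.2] with x hx ⟨hk1, hk2⟩
    exact Stmt1Aux.pt_prod_nonneg hm hmM hk1 hk2 hx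
end

section
/- Pointwise characterization of the projection formula: for reals 0 < m < M and s ∈ ℝ, the number t ∈ [M^{-3}, m^{-3}] satisfies (s - (1/3) t^{-4/3})(k - t) ≥ 0 for all k ∈ [M^{-3}, m^{-3}] if and only if t = (P_{[m^4, M^4]}(3s))^{-3/4}, where P_{[a,b]}(r) = max(a, min(b, r)). -/
/-!
Write `u = t ^ (-4/3)`. The first-order condition says that `s - u/3 > 0` forces `t` to the left
endpoint and `s - u/3 < 0` forces it to the right endpoint. Since `t ↦ t ^ (-4/3)` is a decreasing
bijection of `[M⁻³, m⁻³]` onto `[m⁴, M⁴]`, this says `u < 3s → u = M⁴` and `3s < u → u = m⁴`,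
which is exactly `u = P_{[m⁴, M⁴]}(3s)`; inverting the power gives the formula for `t`.
-/

open Set

theorem forall_mul_sub_nonneg_iff {a b g t : ℝ} (ht : t ∈ Icc a b) :
    (∀ k ∈ Icc a b, 0 ≤ g * (k - t)) ↔ (0 < g → t = a) ∧ (g < 0 → t = b) := by
  refine ⟨fun h => ⟨fun hg => ?_, fun hg => ?_⟩, fun ⟨ha, hb⟩ k hk => ?_⟩
  · have := h a ⟨le_rfl, ht.1.trans ht.2⟩
    nlinarith [ht.1]
  · have := h b ⟨ht.1.trans ht.2, le_rfl⟩
    nlinarith [ht.2]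
  · rcases lt_trichotomy g 0 with hg | rfl | hg
    · rw [hb hg]
      exact mul_nonneg_of_nonpos_of_nonpos hg.le (by linarith [hk.2])
    · simp
    · rw [ha hg]
      exact mul_nonneg hg.le (by linarith [hk.1])

theorem eq_proj_iff {a b r u : ℝ} (hu : u ∈ Icc a b) :
    u = proj a b r ↔ (u < r → u = b) ∧ (r < u → u = a) := by
  obtain ⟨hau, hub⟩ := hu
  unfold proj
  grind

theorem rpow_rpow_of_mul_eq {x p q r : ℝ} (hx : 0 ≤ x) (h : p * q = r) :
    (x ^ p) ^ q = x ^ r := by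
  rw [← Real.rpow_mul hx, h]

theorem eq_rpow_neg_three_quarters_iff {x c : ℝ} (hx : 0 ≤ x) (hc : 0 ≤ c) :
    x = c ^ (-(3/4) : ℝ) ↔ x ^ (-(4/3) : ℝ) = c := by
  rw [show (-(3/4) : ℝ) = (-(4/3))⁻¹ by norm_num]
  exact Real.eq_rpow_inv hx hc (by norm_num)

theorem stmt2 (m M s t : ℝ) (hm : 0 < m) (hmM : m < M)
    (ht : t ∈ Set.Icc (M ^ (-3 : ℝ)) (m ^ (-3 : ℝ))) :
    (∀ k ∈ Set.Icc (M ^ (-3 : ℝ)) (m ^ (-3 : ℝ)),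
        0 ≤ (s - (1/3) * t ^ (-(4/3) : ℝ)) * (k - t)) ↔
      t = proj (m ^ (4 : ℝ)) (M ^ (4 : ℝ)) (3 * s) ^ (-(3/4) : ℝ) := by
  have hM : 0 < M := hm.trans hmM
  have ht0 : 0 < t := (Real.rpow_pos_of_pos hM _).trans_le ht.1
  have hproj : 0 ≤ proj (m ^ (4 : ℝ)) (M ^ (4 : ℝ)) (3 * s) :=
    (Real.rpow_pos_of_pos hm _).le.trans (le_max_left _ _)
  have hu : t ^ (-(4/3) : ℝ) ∈ Icc (m ^ (4 : ℝ)) (M ^ (4 : ℝ)) := by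
    rw [← rpow_rpow_of_mul_eq (p := -3) (q := -(4/3)) hm.le (by norm_num),
      ← rpow_rpow_of_mul_eq (p := -3) (q := -(4/3)) hM.le (by norm_num)]
    exact ⟨Real.rpow_le_rpow_of_nonpos ht0 ht.2 (by norm_num),
      Real.rpow_le_rpow_of_nonpos (by positivity) ht.1 (by norm_num)⟩
  rw [forall_mul_sub_nonneg_iff ht, eq_rpow_neg_three_quarters_iff ht0.le hproj, eq_proj_iff hu,
    ← rpow_rpow_of_mul_eq (p := 4) (q := -(3/4)) hm.le (by norm_num),
    ← rpow_rpow_of_mul_eq (p := 4) (q := -(3/4)) hM.le (by norm_num),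
    eq_rpow_neg_three_quarters_iff ht0.le (by positivity),
    eq_rpow_neg_three_quarters_iff ht0.le (by positivity)]
  exact and_congr (imp_congr_left ⟨fun h => by linarith, fun h => by linarith⟩)
    (imp_congr_left ⟨fun h => by linarith, fun h => by linarith⟩)
end

section
/- Slater-type L^1 bound on the regularized multiplier: let γ > 0, τ > 0, ε_s > 0, and y^γ, y_s ∈ L^2(Ω) with y_s ≥ -τ + ε_s a.e. Set ν^γ := γ min(y^γ + τ, 0). If ⟨ν^γ, y^γ - y_s⟩_{L^2} ≤ C for some constant C, then ε_s ‖ν^γ‖_{L^1(Ω)} ≤ C. -/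
/-! Pointwise, `ν = γ min(y + τ, 0) ≤ 0` and `ν (y - s) = γ min(y + τ, 0)² + |ν| (s + τ)`,
so the Slater condition `s + τ ≥ ε` gives `ε |ν| ≤ ν (y - s)`; integrate. -/

open MeasureTheory

lemma min_add_zero_mul_self (a : ℝ) : min a 0 * a = min a 0 ^ 2 := by
  rcases le_total a 0 with h | h
  · rw [min_eq_left h, sq]
  · rw [min_eq_right h]; ring

lemma mul_abs_mul_min_le_of_slater {γ τ ε y s : ℝ} (hγ : 0 ≤ γ) (hs : -τ + ε ≤ s) :
    ε * |γ * min (y + τ) 0| ≤ γ * min (y + τ) 0 * (y - s) := by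
  have hν : γ * min (y + τ) 0 ≤ 0 := mul_nonpos_of_nonneg_of_nonpos hγ (min_le_right _ _)
  have hsplit : γ * min (y + τ) 0 * (y - s)
      = γ * min (y + τ) 0 ^ 2 + |γ * min (y + τ) 0| * (s + τ) := by
    rw [abs_of_nonpos hν, ← min_add_zero_mul_self]; ring
  rw [hsplit]
  nlinarith [mul_nonneg hγ (sq_nonneg (min (y + τ) 0)), abs_nonneg (γ * min (y + τ) 0)]

lemma MeasureTheory.MemLp.const_mul_min_add_const {α : Type*} [MeasurableSpace α] {μ : Measure α}
    [IsFiniteMeasure μ] {p : ENNReal} {f : α → ℝ} (hf : MemLp f p μ) (γ τ : ℝ) :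
    MemLp (fun x => γ * min (f x + τ) 0) p μ :=
  ((hf.add (memLp_const τ)).inf (memLp_const 0)).const_mul γ

theorem stmt6_general {α : Type*} [MeasurableSpace α] (μ : Measure α) [IsFiniteMeasure μ]
    (γ τ εs C : ℝ) (hγ : 0 < γ)
    (yγ ys : α → ℝ) (hyγ : MemLp yγ 2 μ) (hys : MemLp ys 2 μ)
    (hslater : ∀ᵐ x ∂μ, -τ + εs ≤ ys x)
    (hC : ∫ x, (γ * min (yγ x + τ) 0) * (yγ x - ys x) ∂μ ≤ C) :
    εs * ∫ x, |γ * min (yγ x + τ) 0| ∂μ ≤ C := by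
  have hν : MemLp (fun x => γ * min (yγ x + τ) 0) 2 μ := hyγ.const_mul_min_add_const γ τ
  have hpointwise : ∀ᵐ x ∂μ, εs * |γ * min (yγ x + τ) 0| ≤
      γ * min (yγ x + τ) 0 * (yγ x - ys x) := by
    filter_upwards [hslater] with x hx
    exact mul_abs_mul_min_le_of_slater hγ.le hx
  rw [← integral_const_mul]
  refine (integral_mono_ae ?_ (hν.integrable_mul (hyγ.sub hys)) hpointwise).trans hC
  exact ((hν.integrable one_le_two).abs).const_mul εs

theorem stmt6 {α : Type*} [MeasurableSpace α] (μ : Measure α) [IsFiniteMeasure μ]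
    (γ τ εs C : ℝ) (hγ : 0 < γ) (hτ : 0 < τ) (hεs : 0 < εs)
    (yγ ys : α → ℝ) (hyγ : MemLp yγ 2 μ) (hys : MemLp ys 2 μ)
    (hslater : ∀ᵐ x ∂μ, -τ + εs ≤ ys x)
    (hC : ∫ x, (γ * min (yγ x + τ) 0) * (yγ x - ys x) ∂μ ≤ C) :
    εs * ∫ x, |γ * min (yγ x + τ) 0| ∂μ ≤ C :=
  stmt6_general μ γ τ εs C hγ yγ ys hyγ hys hslater hC
end

section
/- Regularization error bound from constraint violation: let l, l^γ ∈ L_ad with states y = T(z l), y^γ = T(z l^γ) for a bounded linear operator T : L^2(Ω) → H²(Ω) ∩ H¹₀(Ω), and suppose the optimality conditions hold with multiplier ν ∈ M(\bar{Ω}) and regularized multiplier ν^γ = γ(y^γ+τ)^-. If the variational inequalities give c‖l - l^γ‖²_{L²} ≤ ⟨y - y^γ, ν^γ⟩ - ⟨y - y^γ, ν⟩, y ≥ -τ, ν ≤ 0, ⟨y+τ, ν⟩ = 0, then c‖l - l^γ‖²_{L²} ≤ ‖(y^γ + τ)^-‖_{L^∞(Ω)} ‖ν‖_{M(\bar{Ω})}.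 -/
/-! Since `ν ≤ 0` has no positive part, `⟨f, ν⟩ = -∫ f d|ν|`. Splitting
`y - yγ = (y + τ) - (yγ + τ)`, complementarity kills the first term, and
`-∫ (yγ + τ) d|ν| ≤ ‖(yγ + τ)⁻‖_∞ ‖ν‖`. The penalty term `∫ (y - yγ) γ (yγ + τ)⁻` is nonpositive
because `y + τ ≥ 0`, so it can be dropped. -/

open MeasureTheory

/-- Integral of a function against a finite signed measure, via Jordan decomposition. -/
noncomputable def jint {X : Type*} [MeasurableSpace X] (ν : SignedMeasure X) (f : X → ℝ) : ℝ :=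
  ∫ x, f x ∂ν.toJordanDecomposition.posPart - ∫ x, f x ∂ν.toJordanDecomposition.negPart

namespace MeasureTheory.SignedMeasure

variable {X : Type*} [MeasurableSpace X] {ν : SignedMeasure X}

theorem toJordanDecomposition_posPart_eq_zero_of_nonpos (hν : ν ≤ 0) :
    ν.toJordanDecomposition.posPart = 0 := by
  obtain ⟨i, hi, hpos, -, hposPart, -⟩ := ν.toJordanDecomposition_spec
  ext j hj
  rw [hposPart, toMeasureOfZeroLE_apply _ hpos hi hj]
  have hle : ν (i ∩ j) ≤ 0 := by
    simpa using VectorMeasure.le_iff.mp hν (i ∩ j) (hi.inter hj)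
  have hge : 0 ≤ ν (i ∩ j) :=
    VectorMeasure.nonneg_of_zero_le_restrict ν
      (VectorMeasure.zero_le_restrict_subset ν hi Set.inter_subset_left hpos)
  simp [le_antisymm hle hge]

theorem totalVariation_eq_negPart_of_nonpos (hν : ν ≤ 0) :
    ν.totalVariation = ν.toJordanDecomposition.negPart := by
  rw [totalVariation, toJordanDecomposition_posPart_eq_zero_of_nonpos hν, zero_add]

end MeasureTheory.SignedMeasure

theorem Continuous.integrable_of_compactSpace {X : Type*} [TopologicalSpace X] [CompactSpace X]
    [MeasurableSpace X] [OpensMeasurableSpace X] (μ : Measure X) [IsFiniteMeasure μ]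
    {f : X → ℝ} (hf : Continuous f) : Integrable f μ :=
  hf.integrable_of_hasCompactSupport (HasCompactSupport.of_compactSpace f)

section jint

variable {X : Type*} [MeasurableSpace X]

theorem jint_eq_neg_integral_of_nonpos {ν : SignedMeasure X} (hν : ν ≤ 0) (f : X → ℝ) :
    jint ν f = -∫ x, f x ∂ν.toJordanDecomposition.negPart := by
  rw [jint, SignedMeasure.toJordanDecomposition_posPart_eq_zero_of_nonpos hν,
    integral_zero_measure, zero_sub]

theorem jint_sub [TopologicalSpace X] [CompactSpace X] [OpensMeasurableSpace X]
    (ν : SignedMeasure X) {f g : X → ℝ} (hf : Continuous f) (hg : Continuous g) :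
    jint ν (fun x => f x - g x) = jint ν f - jint ν g := by
  rw [jint, jint, jint,
    integral_sub (hf.integrable_of_compactSpace _) (hg.integrable_of_compactSpace _),
    integral_sub (hf.integrable_of_compactSpace _) (hg.integrable_of_compactSpace _)]
  ring

end jint

theorem neg_integral_le_iSup_abs_min_mul {X : Type*} [TopologicalSpace X] [CompactSpace X]
    [MeasurableSpace X] [OpensMeasurableSpace X] (μ : Measure X) [IsFiniteMeasure μ]
    {f : X → ℝ} (hf : Continuous f) :
    -∫ x, f x ∂μ ≤ (⨆ x, |min (f x) 0|) * μ.real Set.univ := by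
  have hcont : Continuous fun x => |min (f x) 0| := by fun_prop
  have hbdd : BddAbove (Set.range fun x => |min (f x) 0|) :=
    (isCompact_range hcont).bddAbove
  calc -∫ x, f x ∂μ = ∫ x, -f x ∂μ := (integral_neg f).symm
    _ ≤ ∫ _x, ⨆ x, |min (f x) 0| ∂μ := by
        refine integral_mono (hf.integrable_of_compactSpace μ).neg (integrable_const _) fun x => ?_
        calc -f x ≤ |min (f x) 0| := by
              rcases le_total (f x) 0 with h | h
              · rw [min_eq_left h, abs_of_nonpos h]
              · simpa [min_eq_right h] using h
          _ ≤ ⨆ x, |min (f x) 0| := le_ciSup hbdd x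
    _ = (⨆ x, |min (f x) 0|) * μ.real Set.univ := by rw [integral_const, smul_eq_mul, mul_comm]

theorem sub_mul_min_zero_nonpos {a b : ℝ} (ha : 0 ≤ a) : (a - b) * min b 0 ≤ 0 := by
  rcases le_total b 0 with h | h
  · rw [min_eq_left h]
    exact mul_nonpos_of_nonneg_of_nonpos (by linarith) h
  · simp [min_eq_right h]

theorem stmt13_general {X : Type*} [MetricSpace X] [CompactSpace X] [MeasurableSpace X] [BorelSpace X]
    (μ : Measure X)
    (τ γ c : ℝ) (hγ : 0 < γ)
    (l lγ : X → ℝ) (y yγ : C(X, ℝ)) (hy : ∀ x, -τ ≤ y x)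
    (ν : SignedMeasure X) (hν : ν ≤ 0)
    (hcompl : jint ν (fun x => y x + τ) = 0)
    (hvi : c * ∫ x, (l x - lγ x) ^ 2 ∂μ ≤
      (∫ x, (y x - yγ x) * (γ * min (yγ x + τ) 0) ∂μ) -
        jint ν (fun x => y x - yγ x)) :
    c * ∫ x, (l x - lγ x) ^ 2 ∂μ ≤
      (⨆ x, |min (yγ x + τ) 0|) * (ν.totalVariation Set.univ).toReal := by
  have hpenalty : ∫ x, (y x - yγ x) * (γ * min (yγ x + τ) 0) ∂μ ≤ 0 := by
    refine integral_nonpos fun x => ?_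
    have h := sub_mul_min_zero_nonpos (b := yγ x + τ) (by linarith [hy x] : 0 ≤ y x + τ)
    calc (y x - yγ x) * (γ * min (yγ x + τ) 0)
        = γ * ((y x + τ - (yγ x + τ)) * min (yγ x + τ) 0) := by ring
      _ ≤ 0 := mul_nonpos_of_nonneg_of_nonpos hγ.le h
  have hsplit : jint ν (fun x => y x - yγ x) = -jint ν (fun x => yγ x + τ) := by
    have hshift : (fun x => y x - yγ x) = fun x => (y x + τ) - (yγ x + τ) := by
      funext x; ring
    rw [hshift, jint_sub ν (by fun_prop) (by fun_prop), hcompl, zero_sub]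
  calc c * ∫ x, (l x - lγ x) ^ 2 ∂μ ≤ -jint ν (fun x => y x - yγ x) := by linarith
    _ = -∫ x, yγ x + τ ∂ν.toJordanDecomposition.negPart := by
        rw [hsplit, neg_neg, jint_eq_neg_integral_of_nonpos hν]
    _ ≤ _ := neg_integral_le_iSup_abs_min_mul _ (by fun_prop)
    _ = _ := by rw [SignedMeasure.totalVariation_eq_negPart_of_nonpos hν, measureReal_def]

theorem stmt13 {X : Type*} [MetricSpace X] [CompactSpace X] [MeasurableSpace X] [BorelSpace X]
    (μ : Measure X) [IsFiniteMeasure μ]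
    (τ γ c : ℝ) (hτ : 0 < τ) (hγ : 0 < γ) (hc : 0 < c)
    (l lγ : X → ℝ) (y yγ : C(X, ℝ)) (hy : ∀ x, -τ ≤ y x)
    (ν : SignedMeasure X) (hν : ν ≤ 0)
    (hcompl : jint ν (fun x => y x + τ) = 0)
    (hvi : c * ∫ x, (l x - lγ x) ^ 2 ∂μ ≤
      (∫ x, (y x - yγ x) * (γ * min (yγ x + τ) 0) ∂μ) -
        jint ν (fun x => y x - yγ x)) :
    c * ∫ x, (l x - lγ x) ^ 2 ∂μ ≤
      (⨆ x, |min (yγ x + τ) 0|) * (ν.totalVariation Set.univ).toReal :=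
  stmt13_general μ τ γ c hγ l lγ y yγ hy ν hν hcompl hvi
end
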